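/- (Lemma 7(i) of the paper.) For every t ∈ ℕ, the noise history is partitioned by the labels: H(t) = L_V(t) ∪ ⋃_{i∈{1,2}} ⋃_{m : 1 ≤ m ≤ e_i(t)} L(i,m,t), and this union is pairwise disjoint; that is, L_V(t) ∩ L(i,m,t) = ∅ for every i and every m ≤ e_i(t), and L(i,m,t) ∩ L(i',m',t) = ∅ whenever (i,m) ≠ (i',m') with m ≤ e_i(t) and m' ≤ e_{i'}(t). -/
import Mathlib

private lemma L_char (D : ℕ) (L : Fin 2 → ℕ → ℕ → Set (Fin 2 × ℕ))
    (hL10 : ∀ i, L i 1 0 = {(i, 0)})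
    (hLm0 : ∀ i m, 2 ≤ m → m ≤ D → L i m 0 = ∅)
    (hL1 : ∀ i t, L i 1 (t + 1) = {(i, t + 1)})
    (hLrec : ∀ i m t, 1 ≤ m → m ≤ D - 1 → L i (m + 1) (t + 1) = L i m t) :
    ∀ t i m, 1 ≤ m → m ≤ D →
      L i m t = if m ≤ t + 1 then {(i, t + 1 - m)} else ∅ := by
  intro t
  induction t with
  | zero =>
    intro i m h1 hm
    rcases Nat.lt_or_ge m 2 with h | h
    · interval_cases m
      simpa using hL10 i
    · rw [hLm0 i m h hm, if_neg (by omega)]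
  | succ t ih =>
    intro i m h1 hm
    rcases m with _ | n
    · omega
    rcases n with _ | n
    · simpa using hL1 i t
    · rw [hLrec i (n + 1) t (by omega) (by omega),
        ih i (n + 1) (by omega) (by omega)]
      by_cases hc : n + 1 ≤ t + 1
      · rw [if_pos hc, if_pos (by omega)]
        have hk : t + 1 - (n + 1) = t + 1 + 1 - (n + 1 + 1) := by omega
        rw [hk]
      · rw [if_neg hc, if_neg (by omega)]

private lemma e_pos (D : ℕ) (d : Fin 2 → ℕ → ℕ) (hd : ∀ i τ, 1 ≤ d i τ ∧ d i τ ≤ D)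
    (e : Fin 2 → ℕ → ℕ)
    (he : ∀ i t, e i t =
      (Finset.Icc (t - (D - 1)) t).inf' (Finset.nonempty_Icc.mpr (Nat.sub_le t (D - 1)))
        (fun τ => d i τ + (t - τ)))
    (i : Fin 2) (t : ℕ) : 1 ≤ e i t := by
  rw [he]
  apply Finset.le_inf'
  intro τ _
  have := (hd i τ).1
  omega

private lemma e_le_D (D : ℕ) (d : Fin 2 → ℕ → ℕ) (hd : ∀ i τ, 1 ≤ d i τ ∧ d i τ ≤ D)
    (e : Fin 2 → ℕ → ℕ)
    (he : ∀ i t, e i t =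
      (Finset.Icc (t - (D - 1)) t).inf' (Finset.nonempty_Icc.mpr (Nat.sub_le t (D - 1)))
        (fun τ => d i τ + (t - τ)))
    (i : Fin 2) (t : ℕ) : e i t ≤ D := by
  rw [he]
  have ht : t ∈ Finset.Icc (t - (D - 1)) t := Finset.mem_Icc.mpr ⟨Nat.sub_le _ _, le_refl _⟩
  have hle := Finset.inf'_le (fun τ => d i τ + (t - τ)) ht
  have := (hd i t).2
  omega

private lemma e_succ_le (D : ℕ) (d : Fin 2 → ℕ → ℕ) (hd : ∀ i τ, 1 ≤ d i τ ∧ d i τ ≤ D)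
    (e : Fin 2 → ℕ → ℕ)
    (he : ∀ i t, e i t =
      (Finset.Icc (t - (D - 1)) t).inf' (Finset.nonempty_Icc.mpr (Nat.sub_le t (D - 1)))
        (fun τ => d i τ + (t - τ)))
    (i : Fin 2) (t : ℕ) : e i (t + 1) ≤ e i t + 1 := by
  obtain ⟨τ, hτ, hτe⟩ := Finset.exists_mem_eq_inf'
    (Finset.nonempty_Icc.mpr (Nat.sub_le t (D - 1))) (fun τ => d i τ + (t - τ))
  rw [Finset.mem_Icc] at hτ
  have heq : e i t = d i τ + (t - τ) := by rw [he]; exact hτe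
  by_cases hc : (t + 1) - (D - 1) ≤ τ
  · have hmem : τ ∈ Finset.Icc ((t + 1) - (D - 1)) (t + 1) :=
      Finset.mem_Icc.mpr ⟨hc, by omega⟩
    have hle := Finset.inf'_le (fun τ => d i τ + (t + 1 - τ)) hmem
    rw [← he i (t + 1)] at hle
    omega
  · have h1 : D ≤ e i t := by
      have := (hd i τ).1
      omega
    have h2 : e i (t + 1) ≤ D := e_le_D D d hd e he i (t + 1)
    omega

private lemma LV_char (D : ℕ) (hD : 1 ≤ D) (d : Fin 2 → ℕ → ℕ)
    (hd : ∀ i τ, 1 ≤ d i τ ∧ d i τ ≤ D)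
    (e : Fin 2 → ℕ → ℕ)
    (he : ∀ i t, e i t =
      (Finset.Icc (t - (D - 1)) t).inf' (Finset.nonempty_Icc.mpr (Nat.sub_le t (D - 1)))
        (fun τ => d i τ + (t - τ)))
    (L : Fin 2 → ℕ → ℕ → Set (Fin 2 × ℕ)) (LV : ℕ → Set (Fin 2 × ℕ))
    (hL10 : ∀ i, L i 1 0 = {(i, 0)})
    (hLm0 : ∀ i m, 2 ≤ m → m ≤ D → L i m 0 = ∅)
    (hLV0 : LV 0 = ∅)
    (hL1 : ∀ i t, L i 1 (t + 1) = {(i, t + 1)})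
    (hLrec : ∀ i m t, 1 ≤ m → m ≤ D - 1 → L i (m + 1) (t + 1) = L i m t)
    (hLVrec : ∀ t, LV (t + 1) =
      LV t ∪ ⋃ i : Fin 2, ⋃ m ∈ Finset.Icc (e i (t + 1)) D, L i m t) :
    ∀ t, LV t = {p : Fin 2 × ℕ | p.2 + e p.1 t ≤ t} := by
  intro t
  induction t with
  | zero =>
    rw [hLV0]
    ext ⟨i, k⟩
    simp only [Set.mem_empty_iff_false, Set.mem_setOf_eq, false_iff]
    have := e_pos D d hd e he i 0
    omega
  | succ t ih =>
    rw [hLVrec, ih]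
    ext ⟨i, k⟩
    simp only [Set.mem_union, Set.mem_setOf_eq, Set.mem_iUnion, Finset.mem_Icc, exists_prop]
    constructor
    · rintro (h | ⟨j, m, ⟨hm1, hm2⟩, hmem⟩)
      · have := e_succ_le D d hd e he i t
        omega
      · rw [L_char D L hL10 hLm0 hL1 hLrec t j m
          (le_trans (e_pos D d hd e he j (t + 1)) hm1) hm2] at hmem
        by_cases hc : m ≤ t + 1
        · rw [if_pos hc] at hmem
          simp only [Set.mem_singleton_iff, Prod.mk.injEq] at hmem
          obtain ⟨rfl, rfl⟩ := hmem
          omega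
        · rw [if_neg hc] at hmem
          exact absurd hmem (Set.notMem_empty _)
    · intro h
      by_cases hc : k + e i t ≤ t
      · exact Or.inl hc
      · right
        have hpos := e_pos D d hd e he i (t + 1)
        have hleD := e_le_D D d hd e he i t
        refine ⟨i, t + 1 - k, ⟨by omega, by omega⟩, ?_⟩
        rw [L_char D L hL10 hLm0 hL1 hLrec t i (t + 1 - k) (by omega) (by omega),
          if_pos (by omega)]
        exact Set.mem_singleton_iff.mpr (Prod.ext rfl (by omega))

/-- Lemma 7(i) of the paper: the noise history `H(t) = {(i,k) : k ≤ t}` is covered by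
`L_V(t)` together with the branch labels `L(i,m,t)` for `1 ≤ m ≤ e_i(t)`, and this
union is pairwise disjoint. -/
theorem stmt_10 (D : ℕ) (hD : 1 ≤ D) (d : Fin 2 → ℕ → ℕ)
    (hd : ∀ i τ, 1 ≤ d i τ ∧ d i τ ≤ D)
    (e : Fin 2 → ℕ → ℕ)
    (he : ∀ i t, e i t =
      (Finset.Icc (t - (D - 1)) t).inf' (Finset.nonempty_Icc.mpr (Nat.sub_le t (D - 1)))
        (fun τ => d i τ + (t - τ)))
    (L : Fin 2 → ℕ → ℕ → Set (Fin 2 × ℕ)) (LV : ℕ → Set (Fin 2 × ℕ))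
    (hL10 : ∀ i, L i 1 0 = {(i, 0)})
    (hLm0 : ∀ i m, 2 ≤ m → m ≤ D → L i m 0 = ∅)
    (hLV0 : LV 0 = ∅)
    (hL1 : ∀ i t, L i 1 (t + 1) = {(i, t + 1)})
    (hLrec : ∀ i m t, 1 ≤ m → m ≤ D - 1 → L i (m + 1) (t + 1) = L i m t)
    (hLVrec : ∀ t, LV (t + 1) =
      LV t ∪ ⋃ i : Fin 2, ⋃ m ∈ Finset.Icc (e i (t + 1)) D, L i m t) :
    ∀ t,
      ({p : Fin 2 × ℕ | p.2 ≤ t} =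
          LV t ∪ ⋃ i : Fin 2, ⋃ m ∈ Finset.Icc 1 (e i t), L i m t) ∧
      (∀ i m, 1 ≤ m → m ≤ e i t → LV t ∩ L i m t = ∅) ∧
      (∀ i m i' m', 1 ≤ m → m ≤ e i t → 1 ≤ m' → m' ≤ e i' t →
        (i, m) ≠ (i', m') → L i m t ∩ L i' m' t = ∅) := by
  intro t
  have hLV := LV_char D hD d hd e he L LV hL10 hLm0 hLV0 hL1 hLrec hLVrec t
  have hLc : ∀ i m, 1 ≤ m → m ≤ D →
      L i m t = if m ≤ t + 1 then {(i, t + 1 - m)} else ∅ :=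
    L_char D L hL10 hLm0 hL1 hLrec t
  refine ⟨?_, ?_, ?_⟩
  · ext ⟨i, k⟩
    simp only [Set.mem_setOf_eq, Set.mem_union, Set.mem_iUnion, Finset.mem_Icc, exists_prop,
      hLV]
    constructor
    · intro hk
      by_cases hc : k + e i t ≤ t
      · exact Or.inl hc
      · right
        have hleD := e_le_D D d hd e he i t
        refine ⟨i, t + 1 - k, ⟨by omega, by omega⟩, ?_⟩
        rw [hLc i (t + 1 - k) (by omega) (by omega), if_pos (by omega)]
        exact Set.mem_singleton_iff.mpr (Prod.ext rfl (by omega))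
    · rintro (h | ⟨j, m, ⟨hm1, hm2⟩, hmem⟩)
      · have := e_pos D d hd e he i t
        omega
      · have hleD := e_le_D D d hd e he j t
        rw [hLc j m hm1 (by omega)] at hmem
        by_cases hc : m ≤ t + 1
        · rw [if_pos hc] at hmem
          simp only [Set.mem_singleton_iff, Prod.mk.injEq] at hmem
          omega
        · rw [if_neg hc] at hmem
          exact absurd hmem (Set.notMem_empty _)
  · intro i m h1 h2
    have hleD := e_le_D D d hd e he i t
    apply Set.eq_empty_iff_forall_notMem.mpr
    rintro ⟨j, k⟩ ⟨hmLV, hmL⟩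
    rw [hLV] at hmLV
    simp only [Set.mem_setOf_eq] at hmLV
    rw [hLc i m h1 (by omega)] at hmL
    by_cases hc : m ≤ t + 1
    · rw [if_pos hc] at hmL
      simp only [Set.mem_singleton_iff, Prod.mk.injEq] at hmL
      obtain ⟨rfl, rfl⟩ := hmL
      omega
    · rw [if_neg hc] at hmL
      exact hmL
  · intro i m i' m' h1 h2 h1' h2' hne
    have hleD := e_le_D D d hd e he i t
    have hleD' := e_le_D D d hd e he i' t
    apply Set.eq_empty_iff_forall_notMem.mpr
    rintro ⟨j, k⟩ ⟨hm1, hm2⟩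
    rw [hLc i m h1 (by omega)] at hm1
    rw [hLc i' m' h1' (by omega)] at hm2
    by_cases hc : m ≤ t + 1
    · by_cases hc' : m' ≤ t + 1
      · rw [if_pos hc] at hm1
        rw [if_pos hc'] at hm2
        simp only [Set.mem_singleton_iff, Prod.mk.injEq] at hm1 hm2
        obtain ⟨rfl, rfl⟩ := hm1
        obtain ⟨rfl, h⟩ := hm2
        have : m = m' := by omega
        exact hne (by rw [this])
      · rw [if_neg hc'] at hm2; exact hm2
    · rw [if_neg hc] at hm1; exact hm1
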